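/- arXiv:2405.18552 — 2 statements merged into one kernel-verified Lean document; each statement's English description precedes it below -/
import Mathlib

section
/- The gradient of the entropy error function E is Lipschitz continuous with constant (1/4)∑_{j=1}^J ‖ξʲ‖²: for all W₁, W₂ ∈ ℝ^p, ‖∇E(W₁) - ∇E(W₂)‖ ≤ (1/4)(∑_{j=1}^J ‖ξʲ‖²) ‖W₁ - W₂‖. -/
open RealInnerProductSpace

lemma sigmoid_hasDerivAt (x : ℝ) :
    HasDerivAt (fun x => 1 / (1 + Real.exp (-x)))
      (Real.exp (-x) / (1 + Real.exp (-x)) ^ 2) x := by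
  have hpos : 0 < 1 + Real.exp (-x) := by positivity
  have h1 : HasDerivAt (fun x : ℝ => 1 + Real.exp (-x)) (-Real.exp (-x)) x := by
    have := (Real.hasDerivAt_exp (-x)).comp x (hasDerivAt_neg x)
    simpa using this.const_add 1
  have h2 := h1.inv hpos.ne'
  simp only [one_div]
  exact h2.congr_deriv (by ring)

lemma sigmoid_lipschitz (a b : ℝ) :
    |1 / (1 + Real.exp (-a)) - 1 / (1 + Real.exp (-b))| ≤ (1/4) * |a - b| := by
  have key : ∀ x ∈ (Set.univ : Set ℝ),
      HasDerivWithinAt (fun x => 1 / (1 + Real.exp (-x)))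
        (Real.exp (-x) / (1 + Real.exp (-x)) ^ 2) Set.univ x :=
    fun x _ => (sigmoid_hasDerivAt x).hasDerivWithinAt
  have bound : ∀ x ∈ (Set.univ : Set ℝ),
      ‖Real.exp (-x) / (1 + Real.exp (-x)) ^ 2‖ ≤ (1/4 : ℝ) := by
    intro x _
    have ht : 0 < Real.exp (-x) := Real.exp_pos _
    rw [Real.norm_eq_abs, abs_of_nonneg (by positivity)]
    rw [div_le_iff₀ (by positivity)]
    nlinarith [sq_nonneg (1 - Real.exp (-x))]
  have := (convex_univ (𝕜 := ℝ) (E := ℝ)).norm_image_sub_le_of_norm_hasDerivWithin_le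
    key bound (Set.mem_univ b) (Set.mem_univ a)
  simpa [Real.norm_eq_abs] using this

theorem entropy_error_gradient_lipschitz {p J : ℕ}
    (g : ℝ → ℝ) (hg : ∀ x, g x = 1 / (1 + Real.exp (-x)))
    (ξ : Fin J → EuclideanSpace ℝ (Fin p)) (ζ : Fin J → ℝ)
    (gradE : EuclideanSpace ℝ (Fin p) → EuclideanSpace ℝ (Fin p))
    (hgrad : ∀ W, gradE W = ∑ j, (g ⟪W, ξ j⟫ - ζ j) • ξ j) :
    ∀ W₁ W₂ : EuclideanSpace ℝ (Fin p),
      ‖gradE W₁ - gradE W₂‖ ≤ (1 / 4) * (∑ j, ‖ξ j‖ ^ 2) * ‖W₁ - W₂‖ := by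
  intro W₁ W₂
  rw [hgrad, hgrad, ← Finset.sum_sub_distrib]
  have hterm : ∀ j : Fin J,
      ‖(g ⟪W₁, ξ j⟫ - ζ j) • ξ j - (g ⟪W₂, ξ j⟫ - ζ j) • ξ j‖
        ≤ (1/4) * ‖ξ j‖ ^ 2 * ‖W₁ - W₂‖ := by
    intro j
    rw [← sub_smul]
    have h1 : g ⟪W₁, ξ j⟫ - ζ j - (g ⟪W₂, ξ j⟫ - ζ j) = g ⟪W₁, ξ j⟫ - g ⟪W₂, ξ j⟫ := by ring
    rw [h1, norm_smul, Real.norm_eq_abs]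
    have h2 : |g ⟪W₁, ξ j⟫ - g ⟪W₂, ξ j⟫| ≤ (1/4) * |⟪W₁, ξ j⟫ - ⟪W₂, ξ j⟫| := by
      rw [hg, hg]; exact sigmoid_lipschitz _ _
    have h3 : |⟪W₁, ξ j⟫ - ⟪W₂, ξ j⟫| ≤ ‖W₁ - W₂‖ * ‖ξ j‖ := by
      rw [← inner_sub_left]
      exact abs_real_inner_le_norm _ _
    calc |g ⟪W₁, ξ j⟫ - g ⟪W₂, ξ j⟫| * ‖ξ j‖
        ≤ ((1/4) * (‖W₁ - W₂‖ * ‖ξ j‖)) * ‖ξ j‖ := by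
          apply mul_le_mul_of_nonneg_right _ (norm_nonneg _)
          exact h2.trans (by nlinarith [abs_nonneg (⟪W₁, ξ j⟫ - ⟪W₂, ξ j⟫)])
      _ = (1/4) * ‖ξ j‖ ^ 2 * ‖W₁ - W₂‖ := by ring
  calc ‖∑ j, ((g ⟪W₁, ξ j⟫ - ζ j) • ξ j - (g ⟪W₂, ξ j⟫ - ζ j) • ξ j)‖
      ≤ ∑ j, ‖(g ⟪W₁, ξ j⟫ - ζ j) • ξ j - (g ⟪W₂, ξ j⟫ - ζ j) • ξ j‖ :=
        norm_sum_le _ _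
    _ ≤ ∑ j, (1/4) * ‖ξ j‖ ^ 2 * ‖W₁ - W₂‖ := Finset.sum_le_sum fun j _ => hterm j
    _ = (1 / 4) * (∑ j, ‖ξ j‖ ^ 2) * ‖W₁ - W₂‖ := by
        rw [← Finset.sum_mul, ← Finset.mul_sum]
end

section
/- The gradient of the regularized entropy error L(W) = E(W) + λH_σ(W) is Lipschitz with constant L = (1/4)∑_{j=1}^J ‖ξʲ‖² + λ sup_t |h_σ''(t)|. -/
open RealInnerProductSpace

lemma sigmoid_deriv (x : ℝ) :
    HasDerivAt (fun x => 1 / (1 + Real.exp (-x))) (Real.exp (-x) / (1 + Real.exp (-x))^2) x := by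
  have h1 : HasDerivAt (fun x : ℝ => 1 + Real.exp (-x)) (-Real.exp (-x)) x := by
    simpa using ((Real.hasDerivAt_exp (-x)).comp x (hasDerivAt_neg x)).const_add 1
  have hne : (1 : ℝ) + Real.exp (-x) ≠ 0 := by positivity
  have := h1.inv hne
  simpa [one_div, neg_div, Pi.inv_def] using this

lemma sigmoid_lip (g : ℝ → ℝ) (hg : ∀ x, g x = 1 / (1 + Real.exp (-x))) (a b : ℝ) :
    |g a - g b| ≤ (1/4) * |a - b| := by
  have hgf : g = fun x => 1 / (1 + Real.exp (-x)) := funext hg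
  have key := Convex.norm_image_sub_le_of_norm_hasDerivWithin_le
    (f := g) (f' := fun x => Real.exp (-x) / (1 + Real.exp (-x))^2) (C := 1/4)
    (fun x _ => (hgf ▸ sigmoid_deriv x : HasDerivAt g _ x).hasDerivWithinAt)
    (fun x _ => by
      have ht : 0 < Real.exp (-x) := Real.exp_pos (-x)
      have hd : (0:ℝ) < (1 + Real.exp (-x))^2 := by positivity
      rw [Real.norm_eq_abs, abs_of_nonneg (by positivity)]
      rw [div_le_iff₀ hd]
      nlinarith [sq_nonneg (1 - Real.exp (-x))])
    convex_univ (Set.mem_univ b) (Set.mem_univ a)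
  simpa [Real.norm_eq_abs] using key

theorem regularized_entropy_gradient_lipschitz {p J : ℕ}
    (g : ℝ → ℝ) (hg : ∀ x, g x = 1 / (1 + Real.exp (-x)))
    (ξ : Fin J → EuclideanSpace ℝ (Fin p)) (ζ : Fin J → ℝ)
    (h h' h'' : ℝ → ℝ) (M : ℝ) (lam : ℝ) (hlam : 0 < lam)
    (hd1 : ∀ t, HasDerivAt h (h' t) t)
    (hd2 : ∀ t, HasDerivAt h' (h'' t) t)
    (hM : ∀ t, |h'' t| ≤ M)
    (gradL : EuclideanSpace ℝ (Fin p) → EuclideanSpace ℝ (Fin p))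
    (hgradL : ∀ W, gradL W =
      (∑ j, (g ⟪W, ξ j⟫ - ζ j) • ξ j) + lam • (WithLp.equiv 2 (Fin p → ℝ)).symm (fun i => h' (W i))) :
    ∀ W₁ W₂ : EuclideanSpace ℝ (Fin p),
      ‖gradL W₁ - gradL W₂‖ ≤ ((1 / 4) * (∑ j, ‖ξ j‖ ^ 2) + lam * M) * ‖W₁ - W₂‖ := by
  intro W₁ W₂
  have hM0 : 0 ≤ M := le_trans (abs_nonneg _) (hM 0)
  -- h' is M-Lipschitz
  have hlip : ∀ a b : ℝ, |h' a - h' b| ≤ M * |a - b| := fun a b =>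
    by simpa [Real.norm_eq_abs] using
      Convex.norm_image_sub_le_of_norm_hasDerivWithin_le (f := h') (f' := h'')
        (fun x _ => (hd2 x).hasDerivWithinAt) (fun x _ => by simpa [Real.norm_eq_abs] using hM x)
        convex_univ (Set.mem_univ b) (Set.mem_univ a)
  rw [hgradL, hgradL]
  have hA : gradL W₁ = gradL W₁ := rfl
  set v₁ : EuclideanSpace ℝ (Fin p) := (WithLp.equiv 2 (Fin p → ℝ)).symm (fun i => h' (W₁ i))
  set v₂ : EuclideanSpace ℝ (Fin p) := (WithLp.equiv 2 (Fin p → ℝ)).symm (fun i => h' (W₂ i))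
  have hsplit :
      (∑ j, (g ⟪W₁, ξ j⟫ - ζ j) • ξ j) + lam • v₁ - ((∑ j, (g ⟪W₂, ξ j⟫ - ζ j) • ξ j) + lam • v₂)
      = (∑ j, (g ⟪W₁, ξ j⟫ - g ⟪W₂, ξ j⟫) • ξ j) + lam • (v₁ - v₂) := by
    rw [add_sub_add_comm, smul_sub, ← Finset.sum_sub_distrib]
    simp only [← sub_smul]
    congr 1
    apply Finset.sum_congr rfl
    intro j _
    congr 1
    ring
  rw [hsplit]
  refine le_trans (norm_add_le _ _) ?_
  have hterm1 : ‖∑ j, (g ⟪W₁, ξ j⟫ - g ⟪W₂, ξ j⟫) • ξ j‖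
      ≤ (1/4) * (∑ j, ‖ξ j‖ ^ 2) * ‖W₁ - W₂‖ := by
    have heq : (1/4 * ∑ j : Fin J, ‖ξ j‖ ^ 2) * ‖W₁ - W₂‖
        = ∑ j : Fin J, 1/4 * (‖ξ j‖ ^ 2 * ‖W₁ - W₂‖) := by
      rw [Finset.mul_sum, Finset.sum_mul]
      exact Finset.sum_congr rfl fun j _ => by ring
    rw [heq]
    refine le_trans (norm_sum_le _ _) ?_
    refine Finset.sum_le_sum fun j _ => ?_
    rw [norm_smul, Real.norm_eq_abs]
    have h1 : |g ⟪W₁, ξ j⟫ - g ⟪W₂, ξ j⟫| ≤ (1/4) * |⟪W₁ - W₂, ξ j⟫| := by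
      have := sigmoid_lip g hg ⟪W₁, ξ j⟫ ⟪W₂, ξ j⟫
      rwa [← inner_sub_left] at this
    have h2 : |⟪W₁ - W₂, ξ j⟫| ≤ ‖W₁ - W₂‖ * ‖ξ j‖ := abs_real_inner_le_norm _ _
    calc |g ⟪W₁, ξ j⟫ - g ⟪W₂, ξ j⟫| * ‖ξ j‖
        ≤ ((1/4) * (‖W₁ - W₂‖ * ‖ξ j‖)) * ‖ξ j‖ := by
          apply mul_le_mul_of_nonneg_right _ (norm_nonneg _)
          exact le_trans h1 (by nlinarith [abs_nonneg (⟪W₁ - W₂, ξ j⟫ : ℝ)])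
      _ = 1/4 * (‖ξ j‖ ^ 2 * ‖W₁ - W₂‖) := by ring
  have hterm2 : ‖lam • (v₁ - v₂)‖ ≤ lam * M * ‖W₁ - W₂‖ := by
    rw [norm_smul, Real.norm_eq_abs, abs_of_pos hlam, mul_assoc]
    refine mul_le_mul_of_nonneg_left ?_ hlam.le
    have hv : ‖v₁ - v₂‖ ≤ M * ‖W₁ - W₂‖ := by
      rw [EuclideanSpace.norm_eq, EuclideanSpace.norm_eq]
      rw [← Real.sqrt_sq (by positivity : (0:ℝ) ≤ M), ← Real.sqrt_mul (by positivity)]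
      apply Real.sqrt_le_sqrt
      rw [Finset.mul_sum]
      refine Finset.sum_le_sum fun i _ => ?_
      have : (v₁ - v₂) i = h' (W₁ i) - h' (W₂ i) := rfl
      rw [this, Real.norm_eq_abs, Real.norm_eq_abs, sq_abs, sq_abs]
      have h3 := hlip (W₁ i) (W₂ i)
      have h4 : (W₁ - W₂) i = W₁ i - W₂ i := rfl
      rw [h4]
      nlinarith [abs_nonneg (h' (W₁ i) - h' (W₂ i)), abs_nonneg (W₁ i - W₂ i),
        sq_abs (h' (W₁ i) - h' (W₂ i)), sq_abs (W₁ i - W₂ i)]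
    exact hv
  calc _ ≤ (1/4) * (∑ j, ‖ξ j‖ ^ 2) * ‖W₁ - W₂‖ + lam * M * ‖W₁ - W₂‖ := add_le_add hterm1 hterm2
    _ = ((1 / 4) * (∑ j, ‖ξ j‖ ^ 2) + lam * M) * ‖W₁ - W₂‖ := by ring
end
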